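/- For every T ∈ ℕ, the control operator W^T is a linear isomorphism of ℝ^T onto ℝ^T (i.e. the map f ↦ (u^f_{1,T},…,u^f_{T,T}) is bijective). -/

import Mathlib

/-!
The system has unit propagation speed: a control vanishing before time `j` leaves
`u_{n,t} = 0` for `t < n + j`, and on the front `t = n + j` the recursion keeps only the term
`a_{n-1} u_{n-1,t-1}`, so `u_{n,n+j} = a_0 ⋯ a_{n-1} f_j`. Hence `W^T` is triangular: if
`W^T f = 0`, reading `u_{T-m,T} = 0` for `m = 0, 1, …` forces `f_m = 0` one coefficient at a
time, because every `a_k > 0`. An injective linear endomorphism of `ℝ^T` is bijective.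
-/

/-- Solution `u^f` of the semi-infinite dynamical system:
`u_{n,t+1} + u_{n,t-1} - a_n u_{n+1,t} - a_{n-1} u_{n-1,t} - b_n u_{n,t} = 0` for `n ≥ 1`,
`u_{n,-1} = u_{n,0} = 0` for `n ≥ 1`, `u_{0,t} = f_t`.  `solS a b f n t = u_{n,t}`. -/
def solS (a b f : ℕ → ℝ) : ℕ → ℕ → ℝ
  | n, 0 => if n = 0 then f 0 else 0
  | n, 1 =>
      if n = 0 then f 1
      else a n * solS a b f (n + 1) 0 + a (n - 1) * solS a b f (n - 1) 0
        + b n * solS a b f n 0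
  | n, t + 2 =>
      if n = 0 then f (t + 2)
      else a n * solS a b f (n + 1) (t + 1) + a (n - 1) * solS a b f (n - 1) (t + 1)
        + b n * solS a b f n (t + 1) - solS a b f n t
  termination_by n t => t

/-- Extension of a finite control `f = (f_0,…,f_{T-1})` by zero. -/
def ctrl (T : ℕ) (f : Fin T → ℝ) : ℕ → ℝ := fun t => if h : t < T then f ⟨t, h⟩ else 0

open Finset

section Wave

variable (a b : ℕ → ℝ)

lemma solS_zero_left (f : ℕ → ℝ) (t : ℕ) : solS a b f 0 t = f t := by
  match t with
  | 0 | 1 | _ + 2 => simp [solS]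

lemma solS_eq_zero_of_lt_add {f : ℕ → ℝ} {j : ℕ} (hf : ∀ s < j, f s = 0) :
    ∀ t n, t < n + j → solS a b f n t = 0 := by
  intro t
  induction t using Nat.strong_induction_on with
  | _ t ih =>
    intro n ht
    match t with
    | 0 =>
      rw [solS]
      split_ifs
      · exact hf 0 (by omega)
      · rfl
    | 1 =>
      rw [solS]
      split_ifs
      · exact hf 1 (by omega)
      · rw [ih 0 (by omega) (n + 1) (by omega), ih 0 (by omega) (n - 1) (by omega),
          ih 0 (by omega) n (by omega)]
        ring
    | t + 2 =>
      rw [solS]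
      split_ifs
      · exact hf (t + 2) (by omega)
      · rw [ih (t + 1) (by omega) (n + 1) (by omega), ih (t + 1) (by omega) (n - 1) (by omega),
          ih (t + 1) (by omega) n (by omega), ih t (by omega) n (by omega)]
        ring

lemma solS_add_self {f : ℕ → ℝ} {j : ℕ} (hf : ∀ s < j, f s = 0) (n : ℕ) :
    solS a b f n (n + j) = (∏ k ∈ range n, a k) * f j := by
  induction n with
  | zero => simp [solS_zero_left]
  | succ n ih =>
    obtain ⟨rfl, rfl⟩ | ⟨m, hm⟩ : (n = 0 ∧ j = 0) ∨ ∃ m, n + j = m + 1 := by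
      rcases Nat.eq_zero_or_pos (n + j) with h | h
      · exact .inl (by omega)
      · exact .inr ⟨n + j - 1, by omega⟩
    · simp [solS]
    · rw [show n + 1 + j = m + 2 by omega, solS, if_neg n.succ_ne_zero, Nat.add_sub_cancel,
        ← hm, solS_eq_zero_of_lt_add a b hf (n + j) (n + 2) (by omega),
        solS_eq_zero_of_lt_add a b hf (n + j) (n + 1) (by omega),
        solS_eq_zero_of_lt_add a b hf m (n + 1) (by omega), ih, prod_range_succ]
      ring

lemma solS_linear_combination (f g : ℕ → ℝ) (c d : ℝ) :
    ∀ t n, solS a b (c • f + d • g) n t = c * solS a b f n t + d * solS a b g n t := by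
  intro t
  induction t using Nat.strong_induction_on with
  | _ t ih =>
    intro n
    match t with
    | 0 =>
      rw [solS.eq_1, solS.eq_1, solS.eq_1]
      split_ifs <;> simp
    | 1 =>
      rw [solS.eq_2, solS.eq_2, solS.eq_2]
      split_ifs
      · simp
      · rw [ih 0 (by omega), ih 0 (by omega), ih 0 (by omega)]
        ring
    | t + 2 =>
      rw [solS, solS, solS]
      split_ifs
      · simp
      · rw [ih (t + 1) (by omega), ih (t + 1) (by omega), ih (t + 1) (by omega), ih t (by omega)]
        ring

noncomputable def solSₗ (n t : ℕ) : (ℕ → ℝ) →ₗ[ℝ] ℝ where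
  toFun f := solS a b f n t
  map_add' f g := by simpa using solS_linear_combination a b f g 1 1 t n
  map_smul' c f := by simpa using solS_linear_combination a b f 0 c 0 t n

lemma eq_zero_of_solS_eq_zero (hapos : ∀ n, 0 < a n) {T : ℕ} {f : ℕ → ℝ}
    (hW : ∀ n, 1 ≤ n → n ≤ T → solS a b f n T = 0) : ∀ m < T, f m = 0 := by
  intro m
  induction m using Nat.strong_induction_on with
  | _ m ih =>
    intro hm
    have hfront := solS_add_self a b (fun s hs => ih s hs (by omega)) (T - m)
    rw [Nat.sub_add_cancel hm.le, hW (T - m) (by omega) (by omega)] at hfront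
    exact (mul_eq_zero.mp hfront.symm).resolve_left (prod_pos fun k _ => hapos k).ne'

end Wave

noncomputable def ctrlₗ (T : ℕ) : (Fin T → ℝ) →ₗ[ℝ] (ℕ → ℝ) where
  toFun := ctrl T
  map_add' f g := by ext t; simp only [ctrl, Pi.add_apply]; split_ifs <;> simp
  map_smul' c f := by ext t; simp only [ctrl, Pi.smul_apply]; split_ifs <;> simp

noncomputable def controlOperator (a b : ℕ → ℝ) (T : ℕ) :
    (Fin T → ℝ) →ₗ[ℝ] (Fin T → ℝ) :=
  LinearMap.pi fun n => (solSₗ a b ((n : ℕ) + 1) T).comp (ctrlₗ T)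

lemma controlOperator_apply (a b : ℕ → ℝ) (T : ℕ) (f : Fin T → ℝ) (n : Fin T) :
    controlOperator a b T f n = solS a b (ctrl T f) ((n : ℕ) + 1) T :=
  rfl

theorem control_operator_bijective_general
    (a b : ℕ → ℝ) (hapos : ∀ n, 0 < a n) (T : ℕ) :
    Function.Bijective
      (fun f : Fin T → ℝ => fun n : Fin T => solS a b (ctrl T f) ((n : ℕ) + 1) T) := by
  have hinj : Function.Injective (controlOperator a b T) := by
    rw [← LinearMap.ker_eq_bot, LinearMap.ker_eq_bot']
    intro f hf
    have hctrl := eq_zero_of_solS_eq_zero a b hapos (f := ctrl T f)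
      fun n (h1 : 1 ≤ n) (h2 : n ≤ T) => by
        simpa [controlOperator_apply, Nat.sub_add_cancel h1] using congrFun hf ⟨n - 1, by omega⟩
    ext m
    simpa [ctrl] using hctrl m m.isLt
  exact ⟨hinj, LinearMap.injective_iff_surjective.mp hinj⟩

/-- the control operator `W^T : ℝ^T → ℝ^T`,
`f ↦ (u^f_{1,T},…,u^f_{T,T})`, is a bijection. -/
theorem control_operator_bijective
    (a b : ℕ → ℝ) (ha0 : a 0 = 1) (hapos : ∀ n, 0 < a n) (T : ℕ) :
    Function.Bijective
      (fun f : Fin T → ℝ => fun n : Fin T => solS a b (ctrl T f) ((n : ℕ) + 1) T) :=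
  control_operator_bijective_general a b hapos T
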